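/- arXiv:2108.01772 — 2 statements merged into one kernel-verified Lean document; each statement's English description precedes it below -/
import Mathlib

section
/- Let A be a p×p real symmetric matrix, B a q×q real symmetric matrix with q ≥ p, and P ∈ ℝ^{q×p}. If PᵀBP ⪯ A, then for each k = 1,…,p: min(λ_{k+q−p}(B)·σ_1(P)², λ_{k+q−p}(B)·σ_p(P)²) ≤ λ_k(A). -/
open Matrix

/-- The `k`-th largest eigenvalue (0-indexed: `k = 0` is the largest) of a
Hermitian (real symmetric) matrix. -/
noncomputable def eigval {n : ℕ} (A : Matrix (Fin n) (Fin n) ℝ) (hA : A.IsHermitian)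
    (k : Fin n) : ℝ :=
  (hA.eigenvalues ∘ Tuple.sort hA.eigenvalues) k.rev

/-- The `k`-th largest singular value (0-indexed) of a real matrix `M`,
defined as the square root of the `k`-th largest eigenvalue of `Mᵀ * M`. -/
noncomputable def singval {m n : ℕ} (M : Matrix (Fin m) (Fin n) ℝ) (k : Fin n) : ℝ :=
  Real.sqrt (eigval (Mᵀ * M)
    (by simpa [Matrix.conjTranspose_eq_transpose_of_trivial] using
      Matrix.isHermitian_conjTranspose_mul_self M) k)

open Finset Module
open scoped RealInnerProductSpace

open Matrix Finset Module
open scoped RealInnerProductSpace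

variable {n : ℕ}

-- quadratic form in eigenbasis coordinates
lemma quad_eq {A : Matrix (Fin n) (Fin n) ℝ} (hA : A.IsHermitian)
    (x : EuclideanSpace ℝ (Fin n)) :
    ⟪x, toEuclideanLin A x⟫ =
      ∑ i, hA.eigenvalues i * (⟪hA.eigenvectorBasis i, x⟫ * ⟪hA.eigenvectorBasis i, x⟫) := by
  have hsym := (isHermitian_iff_isSymmetric.1 hA)
  rw [← OrthonormalBasis.sum_inner_mul_inner hA.eigenvectorBasis]
  refine Finset.sum_congr rfl fun i _ => ?_
  have h1 : ⟪hA.eigenvectorBasis i, toEuclideanLin A x⟫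
      = hA.eigenvalues i * ⟪hA.eigenvectorBasis i, x⟫ := by
    rw [← hsym (hA.eigenvectorBasis i) x]
    have h2 : toEuclideanLin A (hA.eigenvectorBasis i)
        = hA.eigenvalues i • hA.eigenvectorBasis i := by
      apply (WithLp.equiv 2 (Fin n → ℝ)).injective
      simpa using hA.mulVec_eigenvectorBasis i
    rw [h2, inner_smul_left]
    simp
  rw [h1, real_inner_comm x]
  ring

-- if x is in the span of basis vectors indexed by J, coords outside J vanish
lemma inner_eq_zero_of_mem_span {E : Type*} [NormedAddCommGroup E] [InnerProductSpace ℝ E]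
    {ι : Type*} [Fintype ι] (b : OrthonormalBasis ι ℝ E) (J : Finset ι) {i : ι} (hi : i ∉ J)
    {x : E} (hx : x ∈ Submodule.span ℝ (b '' J)) : ⟪b i, x⟫ = 0 := by
  have : x ∈ (Submodule.span ℝ {b i})ᗮ := by
    refine Submodule.span_le.2 ?_ hx
    rintro _ ⟨j, hj, rfl⟩
    intro y hy
    rcases Submodule.mem_span_singleton.1 hy with ⟨c, rfl⟩
    rw [inner_smul_left]
    have : ⟪b i, b j⟫ = 0 := b.orthonormal.2 (fun h => hi (h ▸ hj))
    rw [this, mul_zero]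
  have := this (b i) (Submodule.mem_span_singleton_self _)
  simpa [real_inner_comm] using this

lemma finrank_span_basis {E : Type*} [NormedAddCommGroup E] [InnerProductSpace ℝ E]
    {ι : Type*} [Fintype ι] (b : OrthonormalBasis ι ℝ E) (J : Finset ι) :
    finrank ℝ (Submodule.span ℝ (b '' J) : Submodule ℝ E) = J.card := by
  have hli : LinearIndependent ℝ (fun j : J => b j) :=
    (b.orthonormal.comp _ Subtype.val_injective).linearIndependent
  have : (b '' J : Set E) = Set.range (fun j : J => b j) := by
    ext y; simp [Set.mem_image]
  rw [this, finrank_span_eq_card hli, Fintype.card_coe]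

lemma quad_ge_on_span {A : Matrix (Fin n) (Fin n) ℝ} (hA : A.IsHermitian)
    (J : Finset (Fin n)) {c : ℝ} (hJ : ∀ j ∈ J, c ≤ hA.eigenvalues j)
    {x : EuclideanSpace ℝ (Fin n)}
    (hx : x ∈ Submodule.span ℝ (hA.eigenvectorBasis '' J)) :
    c * ⟪x, x⟫ ≤ ⟪x, toEuclideanLin A x⟫ := by
  rw [quad_eq hA, ← OrthonormalBasis.sum_inner_mul_inner hA.eigenvectorBasis x x,
    Finset.mul_sum]
  refine Finset.sum_le_sum fun i _ => ?_
  have hcomm : ⟪x, hA.eigenvectorBasis i⟫ = ⟪hA.eigenvectorBasis i, x⟫ := real_inner_comm _ _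
  rw [hcomm]
  by_cases hi : i ∈ J
  · have := mul_le_mul_of_nonneg_right (hJ i hi) (mul_self_nonneg ⟪hA.eigenvectorBasis i, x⟫)
    linarith
  · rw [inner_eq_zero_of_mem_span hA.eigenvectorBasis J hi hx]; simp

lemma quad_le_on_span {A : Matrix (Fin n) (Fin n) ℝ} (hA : A.IsHermitian)
    (J : Finset (Fin n)) {c : ℝ} (hJ : ∀ j ∈ J, hA.eigenvalues j ≤ c)
    {x : EuclideanSpace ℝ (Fin n)}
    (hx : x ∈ Submodule.span ℝ (hA.eigenvectorBasis '' J)) :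
    ⟪x, toEuclideanLin A x⟫ ≤ c * ⟪x, x⟫ := by
  rw [quad_eq hA, ← OrthonormalBasis.sum_inner_mul_inner hA.eigenvectorBasis x x,
    Finset.mul_sum]
  refine Finset.sum_le_sum fun i _ => ?_
  have hcomm : ⟪x, hA.eigenvectorBasis i⟫ = ⟪hA.eigenvectorBasis i, x⟫ := real_inner_comm _ _
  rw [hcomm]
  by_cases hi : i ∈ J
  · have := mul_le_mul_of_nonneg_right (hJ i hi) (mul_self_nonneg ⟪hA.eigenvectorBasis i, x⟫)
    linarith
  · rw [inner_eq_zero_of_mem_span hA.eigenvectorBasis J hi hx]; simp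

lemma exists_bot_span {A : Matrix (Fin n) (Fin n) ℝ} (hA : A.IsHermitian) (j0 : Fin n) :
    ∃ V : Submodule ℝ (EuclideanSpace ℝ (Fin n)), finrank ℝ V = j0 + 1 ∧
      ∀ x ∈ V, ⟪x, toEuclideanLin A x⟫ ≤
        (hA.eigenvalues ∘ Tuple.sort hA.eigenvalues) j0 * ⟪x, x⟫ := by
  set σ := Tuple.sort hA.eigenvalues
  refine ⟨Submodule.span ℝ (hA.eigenvectorBasis '' ((Finset.Iic j0).image σ)), ?_, ?_⟩
  · rw [finrank_span_basis, Finset.card_image_of_injective _ σ.injective, Fin.card_Iic]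
  · intro x hx
    refine quad_le_on_span hA _ (fun j hj => ?_) hx
    rcases Finset.mem_image.1 hj with ⟨i, hi, rfl⟩
    exact Tuple.monotone_sort hA.eigenvalues (Finset.mem_Iic.1 hi)

lemma exists_top_span {A : Matrix (Fin n) (Fin n) ℝ} (hA : A.IsHermitian) (j0 : Fin n) :
    ∃ V : Submodule ℝ (EuclideanSpace ℝ (Fin n)), finrank ℝ V = n - j0 ∧
      ∀ x ∈ V, (hA.eigenvalues ∘ Tuple.sort hA.eigenvalues) j0 * ⟪x, x⟫ ≤
        ⟪x, toEuclideanLin A x⟫ := by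
  set σ := Tuple.sort hA.eigenvalues
  refine ⟨Submodule.span ℝ (hA.eigenvectorBasis '' ((Finset.Ici j0).image σ)), ?_, ?_⟩
  · rw [finrank_span_basis, Finset.card_image_of_injective _ σ.injective, Fin.card_Ici]
  · intro x hx
    refine quad_ge_on_span hA _ (fun j hj => ?_) hx
    rcases Finset.mem_image.1 hj with ⟨i, hi, rfl⟩
    exact Tuple.monotone_sort hA.eigenvalues (Finset.mem_Ici.1 hi)

lemma eigval_ge {A : Matrix (Fin n) (Fin n) ℝ} (hA : A.IsHermitian) (k : Fin n) {c : ℝ}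
    (W : Submodule ℝ (EuclideanSpace ℝ (Fin n))) (hW : (k : ℕ) + 1 ≤ finrank ℝ W)
    (hq : ∀ x ∈ W, c * ⟪x, x⟫ ≤ ⟪x, toEuclideanLin A x⟫) :
    c ≤ eigval A hA k := by
  obtain ⟨V, hVrank, hVle⟩ := exists_bot_span hA k.rev
  have hrev : (k.rev : ℕ) = n - 1 - k := by
    rw [Fin.val_rev]; omega
  have hn : finrank ℝ (EuclideanSpace ℝ (Fin n)) = n := finrank_euclideanSpace_fin
  have hsum := Submodule.finrank_sup_add_finrank_inf_eq W V
  have hle := Submodule.finrank_le (W ⊔ V)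
  have hpos : 0 < finrank ℝ ((W ⊓ V : Submodule ℝ (EuclideanSpace ℝ (Fin n)))) := by
    have hk : (k : ℕ) < n := k.isLt
    omega
  have hnt : Nontrivial ((W ⊓ V : Submodule ℝ (EuclideanSpace ℝ (Fin n)))) := by
    apply Submodule.nontrivial_iff_ne_bot.mpr
    intro h
    rw [h, finrank_bot] at hpos
    exact lt_irrefl 0 hpos
  obtain ⟨⟨x, hxWV⟩, hx0⟩ := exists_ne (0 : (W ⊓ V : Submodule ℝ (EuclideanSpace ℝ (Fin n))))
  · have hxne : x ≠ 0 := by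
      intro h
      apply hx0
      exact Subtype.ext h
    have h1 := hq x hxWV.1
    have h2 := hVle x hxWV.2
    have h3 : (0:ℝ) < ⟪x, x⟫ := by
      rcases lt_or_eq_of_le (real_inner_self_nonneg (x := x)) with h | h
      · exact h
      · exact absurd ((real_inner_self_nonpos (x := x)).1 h.ge) hxne
    have : c * ⟪x, x⟫ ≤ (hA.eigenvalues ∘ Tuple.sort hA.eigenvalues) k.rev * ⟪x, x⟫ :=
      le_trans h1 h2
    exact le_of_mul_le_mul_right (by simpa [mul_comm, eigval] using this) h3

lemma finrank_comap_ge {E F : Type*} [AddCommGroup E] [Module ℝ E] [AddCommGroup F] [Module ℝ F]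
    [FiniteDimensional ℝ E] [FiniteDimensional ℝ F] (f : E →ₗ[ℝ] F) (S : Submodule ℝ F) :
    finrank ℝ E - (finrank ℝ F - finrank ℝ S) ≤ finrank ℝ (S.comap f) := by
  have hker : LinearMap.ker (S.mkQ ∘ₗ f) = S.comap f := by
    rw [LinearMap.ker_comp, Submodule.ker_mkQ]
  have h1 := LinearMap.finrank_range_add_finrank_ker (S.mkQ ∘ₗ f)
  have h2 := Submodule.finrank_le (LinearMap.range (S.mkQ ∘ₗ f))
  have h3 := S.finrank_quotient_add_finrank
  have h4 := Submodule.finrank_le S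
  rw [hker] at h1
  omega

lemma inner_eq_dot {m : ℕ} (x y : EuclideanSpace ℝ (Fin m)) :
    ⟪x, y⟫ = (WithLp.equiv 2 (Fin m → ℝ) x) ⬝ᵥ (WithLp.equiv 2 (Fin m → ℝ) y) := by
  simp [PiLp.inner_apply, dotProduct, RCLike.inner_apply, mul_comm]

lemma quad_comp {m l : ℕ} (P : Matrix (Fin m) (Fin l) ℝ) (B : Matrix (Fin m) (Fin m) ℝ)
    (y : EuclideanSpace ℝ (Fin l)) :
    ⟪y, toEuclideanLin (Pᵀ * B * P) y⟫ =
      ⟪toEuclideanLin P y, toEuclideanLin B (toEuclideanLin P y)⟫ := by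
  rw [inner_eq_dot, inner_eq_dot]
  simp only [WithLp.equiv_apply, ofLp_toEuclideanLin_apply]
  rw [← Matrix.mulVec_mulVec, ← Matrix.mulVec_mulVec, dotProduct_mulVec,
    Matrix.vecMul_transpose]

lemma quad_self {m l : ℕ} (P : Matrix (Fin m) (Fin l) ℝ) (y : EuclideanSpace ℝ (Fin l)) :
    ⟪y, toEuclideanLin (Pᵀ * P) y⟫ = ⟪toEuclideanLin P y, toEuclideanLin P y⟫ := by
  rw [inner_eq_dot, inner_eq_dot]
  simp only [WithLp.equiv_apply, ofLp_toEuclideanLin_apply]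
  rw [← Matrix.mulVec_mulVec, dotProduct_mulVec, Matrix.vecMul_transpose]

lemma quad_nonneg_of_posSemidef {m : ℕ} {M : Matrix (Fin m) (Fin m) ℝ} (hM : M.PosSemidef)
    (y : EuclideanSpace ℝ (Fin m)) : 0 ≤ ⟪y, toEuclideanLin M y⟫ := by
  rw [inner_eq_dot]
  simpa [ofLp_toEuclideanLin_apply] using hM.dotProduct_mulVec_nonneg (WithLp.equiv 2 (Fin m → ℝ) y)

theorem stmt2 {p q : ℕ} (hpq : p ≤ q) (A : Matrix (Fin p) (Fin p) ℝ)
    (B : Matrix (Fin q) (Fin q) ℝ) (P : Matrix (Fin q) (Fin p) ℝ)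
    (hA : A.IsHermitian) (hB : B.IsHermitian)
    (hle : (A - Pᵀ * B * P).PosSemidef) (k : Fin p) :
    min (eigval B hB ⟨k + (q - p), by omega⟩ * singval P ⟨0, k.pos⟩ ^ 2)
        (eigval B hB ⟨k + (q - p), by omega⟩ *
          singval P ⟨p - 1, Nat.sub_lt k.pos one_pos⟩ ^ 2) ≤
      eigval A hA k := by
  classical
  have hp : 0 < p := k.pos
  have hkp : (k : ℕ) < p := k.isLt
  have hM : (Pᵀ * P).IsHermitian := by
    simpa [Matrix.conjTranspose_eq_transpose_of_trivial] using
      Matrix.isHermitian_conjTranspose_mul_self P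
  have hMpsd : (Pᵀ * P).PosSemidef := by
    simpa [Matrix.conjTranspose_eq_transpose_of_trivial] using
      Matrix.posSemidef_conjTranspose_mul_self P
  have hs : ∀ j : Fin p, singval P j ^ 2 = eigval (Pᵀ * P) hM j := by
    intro j
    rw [singval, Real.sq_sqrt]
    exact hMpsd.eigenvalues_nonneg _
  set kq : Fin q := ⟨k + (q - p), by omega⟩ with hkqdef
  obtain ⟨S, hSrank, hSquad⟩ := exists_top_span hB kq.rev
  have hkqval : (kq : ℕ) = k + (q - p) := rfl
  have hkqrev : (kq.rev : ℕ) = p - 1 - k := by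
    rw [Fin.val_rev, hkqval]
    omega
  set f := toEuclideanLin P with hf
  set W := S.comap f with hWdef
  have e1 : finrank ℝ (EuclideanSpace ℝ (Fin p)) = p := finrank_euclideanSpace_fin
  have e2 : finrank ℝ (EuclideanSpace ℝ (Fin q)) = q := finrank_euclideanSpace_fin
  have hWrank : (k : ℕ) + 1 ≤ finrank ℝ W := by
    have h := finrank_comap_ge f S
    rw [← hWdef, hSrank, e1, e2, hkqrev] at h
    calc (k : ℕ) + 1 = p - (q - (q - (p - 1 - ↑k))) := by omega
      _ ≤ _ := h
  -- extremal bounds for ⟪f y, f y⟫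
  obtain ⟨V1, hV1rank, hV1⟩ := exists_top_span hM ⟨0, hp⟩
  obtain ⟨V2, hV2rank, hV2⟩ := exists_bot_span hM ⟨p - 1, Nat.sub_lt hp one_pos⟩
  have hV1top : V1 = ⊤ := Submodule.eq_top_of_finrank_eq (by rw [hV1rank, e1]; exact Nat.sub_zero p)
  have hV2top : V2 = ⊤ := Submodule.eq_top_of_finrank_eq (by rw [hV2rank, e1]; show p - 1 + 1 = p; omega)
  have hrev1 : (⟨p - 1, Nat.sub_lt hp one_pos⟩ : Fin p).rev = ⟨0, hp⟩ := by
    ext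
    rw [Fin.val_rev]
    show p - (p - 1 + 1) = 0
    omega
  have hrev2 : (⟨0, hp⟩ : Fin p).rev = ⟨p - 1, Nat.sub_lt hp one_pos⟩ := by
    ext
    rw [Fin.val_rev]
    show p - (0 + 1) = p - 1
    omega
  have hσmin : ∀ y : EuclideanSpace ℝ (Fin p),
      singval P ⟨p - 1, Nat.sub_lt k.pos one_pos⟩ ^ 2 * ⟪y, y⟫ ≤ ⟪f y, f y⟫ := by
    intro y
    have h := hV1 y (hV1top ▸ Submodule.mem_top)
    rw [quad_self P y] at h
    have hidx : singval P ⟨p - 1, Nat.sub_lt k.pos one_pos⟩ ^ 2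
        = (hM.eigenvalues ∘ Tuple.sort hM.eigenvalues) ⟨0, hp⟩ := by
      rw [hs]
      simp only [eigval]
      rw [hrev1]
    rw [hidx]
    exact h
  have hσmax : ∀ y : EuclideanSpace ℝ (Fin p),
      ⟪f y, f y⟫ ≤ singval P ⟨0, k.pos⟩ ^ 2 * ⟪y, y⟫ := by
    intro y
    have h := hV2 y (hV2top ▸ Submodule.mem_top)
    rw [quad_self P y] at h
    have hidx : singval P ⟨0, k.pos⟩ ^ 2
        = (hM.eigenvalues ∘ Tuple.sort hM.eigenvalues) ⟨p - 1, Nat.sub_lt hp one_pos⟩ := by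
      rw [hs]
      simp only [eigval]
      rw [hrev2]
    rw [hidx]
    exact h
  refine eigval_ge hA k W hWrank ?_
  intro y hyW
  have hyS : f y ∈ S := hyW
  have h1 : (hB.eigenvalues ∘ Tuple.sort hB.eigenvalues) kq.rev * ⟪f y, f y⟫
      ≤ ⟪f y, toEuclideanLin B (f y)⟫ := hSquad _ hyS
  have hc : eigval B hB kq = (hB.eigenvalues ∘ Tuple.sort hB.eigenvalues) kq.rev := rfl
  have h2 : ⟪y, toEuclideanLin (Pᵀ * B * P) y⟫ ≤ ⟪y, toEuclideanLin A y⟫ := by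
    have h3 := quad_nonneg_of_posSemidef hle y
    rw [map_sub, LinearMap.sub_apply, inner_sub_right] at h3
    linarith
  have h4 := quad_comp P B y
  have h5 := hσmin y
  have h6 := hσmax y
  have hyy : (0:ℝ) ≤ ⟪y, y⟫ := real_inner_self_nonneg
  set c := eigval B hB kq with hcdef
  set s1 := singval P ⟨0, k.pos⟩ ^ 2 with hs1
  set s2 := singval P ⟨p - 1, Nat.sub_lt k.pos one_pos⟩ ^ 2 with hs2
  rw [← hc] at h1
  rcases le_total 0 c with hcs | hcs
  · have hmin : min (c * s1) (c * s2) ≤ c * s2 := min_le_right _ _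
    have : c * (s2 * ⟪y, y⟫) ≤ c * ⟪f y, f y⟫ := mul_le_mul_of_nonneg_left h5 hcs
    have hyy2 : min (c * s1) (c * s2) * ⟪y, y⟫ ≤ c * s2 * ⟪y, y⟫ :=
      mul_le_mul_of_nonneg_right hmin hyy
    calc min (c * s1) (c * s2) * ⟪y, y⟫ ≤ c * s2 * ⟪y, y⟫ := hyy2
      _ = c * (s2 * ⟪y, y⟫) := by ring
      _ ≤ c * ⟪f y, f y⟫ := this
      _ ≤ ⟪f y, toEuclideanLin B (f y)⟫ := h1
      _ = ⟪y, toEuclideanLin (Pᵀ * B * P) y⟫ := h4.symm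
      _ ≤ ⟪y, toEuclideanLin A y⟫ := h2
  · have hmin : min (c * s1) (c * s2) ≤ c * s1 := min_le_left _ _
    have : c * (s1 * ⟪y, y⟫) ≤ c * ⟪f y, f y⟫ := mul_le_mul_of_nonpos_left h6 hcs
    have hyy2 : min (c * s1) (c * s2) * ⟪y, y⟫ ≤ c * s1 * ⟪y, y⟫ :=
      mul_le_mul_of_nonneg_right hmin hyy
    calc min (c * s1) (c * s2) * ⟪y, y⟫ ≤ c * s1 * ⟪y, y⟫ := hyy2
      _ = c * (s1 * ⟪y, y⟫) := by ring
      _ ≤ c * ⟪f y, f y⟫ := this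
      _ ≤ ⟪f y, toEuclideanLin B (f y)⟫ := h1
      _ = ⟪y, toEuclideanLin (Pᵀ * B * P) y⟫ := h4.symm
      _ ≤ ⟪y, toEuclideanLin A y⟫ := h2
end

section
/- Let L ∈ ℝ^{p1×r}, R ∈ ℝ^{p2×r} with X = LRᵀ of rank r and compact SVD X = UΣVᵀ; set P1 = UᵀL, P2 = VᵀR (both invertible with P1P2ᵀ = Σ). For A = [A_L; A_R] with A_L = (U S P2P2ᵀ + U⊥D1)P2^{-ᵀ} and A_R = (V Sᵀ P1P1ᵀ + V⊥D2)P1^{-ᵀ} (i.e., A in the subspace 𝒜_n̄ull^{L,R}), define L_{L,R}(A) = LA_Rᵀ + A_L Rᵀ. Then min(σ_r(L), σ_r(R))²·‖A‖_F² ≤ ‖L_{L,R}(A)‖_F² ≤ 2·max(σ_1(L), σ_1(R))²·‖A‖_F², where ‖A‖_F² = ‖A_L‖_F² + ‖A_R‖_F². -/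
open Matrix

/-- Squared Frobenius norm of a real matrix. -/
def frobSq {m n : ℕ} (M : Matrix (Fin m) (Fin n) ℝ) : ℝ :=
  ∑ i, ∑ j, (M i j) ^ 2

/- ------------------- auxiliary lemmas ------------------- -/

lemma quad_bounds {n : ℕ} (A : Matrix (Fin n) (Fin n) ℝ) (hA : A.IsHermitian)
    (lo hi : ℝ) (hlo : ∀ i, lo ≤ hA.eigenvalues i) (hhi : ∀ i, hA.eigenvalues i ≤ hi)
    (x : Fin n → ℝ) :
    lo * (x ⬝ᵥ x) ≤ x ⬝ᵥ (A *ᵥ x) ∧ x ⬝ᵥ (A *ᵥ x) ≤ hi * (x ⬝ᵥ x) := by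
  classical
  set W : Matrix (Fin n) (Fin n) ℝ := (hA.eigenvectorUnitary : Matrix (Fin n) (Fin n) ℝ) with hWdef
  have hWW : W * Wᵀ = 1 := by
    have := (Matrix.mem_unitaryGroup_iff).mp hA.eigenvectorUnitary.2
    rwa [← Matrix.conjTranspose_eq_transpose_of_trivial]
  have hspec : A = W * Matrix.diagonal hA.eigenvalues * Wᵀ := by
    have h := hA.spectral_theorem
    rw [Unitary.conjStarAlgAut_apply] at h
    rw [Matrix.star_eq_conjTranspose, Matrix.conjTranspose_eq_transpose_of_trivial] at h
    exact h
  set c : Fin n → ℝ := Wᵀ *ᵥ x with hc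
  have hdot : ∀ y : Fin n → ℝ, x ⬝ᵥ (W *ᵥ y) = c ⬝ᵥ y := by
    intro y
    rw [Matrix.dotProduct_mulVec, hc, ← Matrix.vecMul_transpose, Matrix.transpose_transpose]
  have hxx : x ⬝ᵥ x = ∑ i, c i ^ 2 := by
    have h1 : x ⬝ᵥ x = x ⬝ᵥ ((W * Wᵀ) *ᵥ x) := by rw [hWW, Matrix.one_mulVec]
    rw [h1, ← Matrix.mulVec_mulVec, hdot]
    simp [dotProduct, sq]
    rfl
  have hAxx : x ⬝ᵥ (A *ᵥ x) = ∑ i, hA.eigenvalues i * c i ^ 2 := by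
    conv_lhs => rw [hspec]
    rw [← Matrix.mulVec_mulVec, ← Matrix.mulVec_mulVec, hdot]
    simp [dotProduct, Matrix.mulVec_diagonal, sq]
    exact Finset.sum_congr rfl fun i _ => by ring
  constructor
  · rw [hxx, hAxx, Finset.mul_sum]
    exact Finset.sum_le_sum fun i _ => mul_le_mul_of_nonneg_right (hlo i) (sq_nonneg _)
  · rw [hxx, hAxx, Finset.mul_sum]
    exact Finset.sum_le_sum fun i _ => mul_le_mul_of_nonneg_right (hhi i) (sq_nonneg _)

lemma eigval_min_le {n : ℕ} (hn : 0 < n) (A : Matrix (Fin n) (Fin n) ℝ) (hA : A.IsHermitian)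
    (i : Fin n) : eigval A hA ⟨n - 1, by omega⟩ ≤ hA.eigenvalues i := by
  have hrev : (⟨n - 1, by omega⟩ : Fin n).rev = ⟨0, hn⟩ := by
    ext; simp [Fin.rev]; omega
  unfold eigval
  rw [hrev]
  set f := hA.eigenvalues with hf
  set σ := Tuple.sort f with hσ
  have key : (f ∘ σ) (σ.symm i) = f i := congrArg f (σ.apply_symm_apply i)
  rw [← key]
  exact Tuple.monotone_sort f (Fin.mk_le_mk.mpr (Nat.zero_le _) : (⟨0, hn⟩ : Fin n) ≤ σ.symm i)

lemma le_eigval_max {n : ℕ} (hn : 0 < n) (A : Matrix (Fin n) (Fin n) ℝ) (hA : A.IsHermitian)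
    (i : Fin n) : hA.eigenvalues i ≤ eigval A hA ⟨0, hn⟩ := by
  have hrev : (⟨0, hn⟩ : Fin n).rev = ⟨n - 1, by omega⟩ := by
    ext; simp [Fin.rev]
  unfold eigval
  rw [hrev]
  set f := hA.eigenvalues with hf
  set σ := Tuple.sort f with hσ
  have key : (f ∘ σ) (σ.symm i) = f i := congrArg f (σ.apply_symm_apply i)
  rw [← key]
  refine Tuple.monotone_sort f ?_
  have h2 := (σ.symm i).isLt
  rw [Fin.le_def]
  simpa using by omega

lemma frobSq_eq_trace {m n : ℕ} (M : Matrix (Fin m) (Fin n) ℝ) :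
    frobSq M = (Mᵀ * M).trace := by
  simp only [frobSq, Matrix.trace, Matrix.diag, Matrix.mul_apply, Matrix.transpose_apply, sq]
  exact Finset.sum_comm

lemma frobSq_nonneg {m n : ℕ} (M : Matrix (Fin m) (Fin n) ℝ) : 0 ≤ frobSq M :=
  Finset.sum_nonneg fun _ _ => Finset.sum_nonneg fun _ _ => sq_nonneg _

lemma frobSq_transpose {m n : ℕ} (M : Matrix (Fin m) (Fin n) ℝ) : frobSq Mᵀ = frobSq M := by
  simp only [frobSq, Matrix.transpose_apply]
  exact Finset.sum_comm

lemma frobSq_ortho {p q k l : ℕ} (U : Matrix (Fin p) (Fin q) ℝ) (W : Matrix (Fin p) (Fin l) ℝ)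
    (A : Matrix (Fin q) (Fin k) ℝ) (B : Matrix (Fin l) (Fin k) ℝ)
    (hU : Uᵀ * U = 1) (hW : Wᵀ * W = 1) (hUW : Uᵀ * W = 0) :
    frobSq (U * A + W * B) = frobSq A + frobSq B := by
  have hWU : Wᵀ * U = 0 := by
    have := congrArg Matrix.transpose hUW
    simpa [Matrix.transpose_mul] using this
  have h1 : ∀ {k : ℕ} (C : Matrix (Fin q) (Fin k) ℝ), Uᵀ * (U * C) = C := fun C => by
    rw [← Matrix.mul_assoc, hU, Matrix.one_mul]
  have h2 : ∀ {k : ℕ} (C : Matrix (Fin l) (Fin k) ℝ), Wᵀ * (W * C) = C := fun C => by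
    rw [← Matrix.mul_assoc, hW, Matrix.one_mul]
  have h3 : ∀ {k : ℕ} (C : Matrix (Fin l) (Fin k) ℝ), Uᵀ * (W * C) = 0 := fun C => by
    rw [← Matrix.mul_assoc, hUW, Matrix.zero_mul]
  have h4 : ∀ {k : ℕ} (C : Matrix (Fin q) (Fin k) ℝ), Wᵀ * (U * C) = 0 := fun C => by
    rw [← Matrix.mul_assoc, hWU, Matrix.zero_mul]
  rw [frobSq_eq_trace, frobSq_eq_trace, frobSq_eq_trace]
  have : (U * A + W * B)ᵀ * (U * A + W * B) = Aᵀ * A + Bᵀ * B := by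
    simp [Matrix.transpose_add, Matrix.transpose_mul, Matrix.add_mul, Matrix.mul_add,
      Matrix.mul_assoc, h1, h2, h3, h4]
  rw [this, Matrix.trace_add]

lemma frobSq_mul_orthoT {m n k : ℕ} (A : Matrix (Fin m) (Fin n) ℝ)
    (V : Matrix (Fin k) (Fin n) ℝ) (hV : Vᵀ * V = 1) :
    frobSq (A * Vᵀ) = frobSq A := by
  rw [frobSq_eq_trace, frobSq_eq_trace]
  have : (A * Vᵀ)ᵀ * (A * Vᵀ) = V * ((Aᵀ * A) * Vᵀ) := by
    simp [Matrix.transpose_mul, Matrix.mul_assoc]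
  rw [this, Matrix.trace_mul_comm, Matrix.mul_assoc, hV, Matrix.mul_one]

lemma frobSq_add_le {m n : ℕ} (X Y : Matrix (Fin m) (Fin n) ℝ) :
    frobSq (X + Y) ≤ 2 * frobSq X + 2 * frobSq Y := by
  have h : ∀ i j, (X i j + Y i j) ^ 2 ≤ 2 * (X i j) ^ 2 + 2 * (Y i j) ^ 2 := fun i j => by
    nlinarith [sq_nonneg (X i j - Y i j)]
  calc frobSq (X + Y) ≤ ∑ i, ∑ j, (2 * (X i j) ^ 2 + 2 * (Y i j) ^ 2) := by
        refine Finset.sum_le_sum fun i _ => Finset.sum_le_sum fun j _ => ?_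
        simpa using h i j
    _ = 2 * frobSq X + 2 * frobSq Y := by
        simp [frobSq, Finset.sum_add_distrib, Finset.mul_sum]

lemma frobSq_transpose_add {n : ℕ} (X Y : Matrix (Fin n) (Fin n) ℝ) :
    frobSq (Xᵀ + Y) = frobSq X + frobSq Y + 2 * (X * Y).trace := by
  rw [frobSq_eq_trace]
  have : (Xᵀ + Y)ᵀ * (Xᵀ + Y) = X * Xᵀ + X * Y + ((X * Y)ᵀ + Yᵀ * Y) := by
    simp [Matrix.transpose_add, Matrix.transpose_mul, Matrix.add_mul, Matrix.mul_add]
    abel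
  rw [this]
  simp only [Matrix.trace_add, Matrix.trace_transpose]
  rw [Matrix.trace_mul_comm X Xᵀ, ← frobSq_eq_trace, ← frobSq_eq_trace]
  ring

lemma frobSq_mul_transpose_rows {m n k : ℕ} (B : Matrix (Fin m) (Fin n) ℝ)
    (P : Matrix (Fin k) (Fin n) ℝ) :
    frobSq (B * Pᵀ) = ∑ i, (B i) ⬝ᵥ ((Pᵀ * P) *ᵥ (B i)) := by
  unfold frobSq
  refine Finset.sum_congr rfl fun i _ => ?_
  have h1 : ∀ j, (B * Pᵀ) i j = (P *ᵥ (B i)) j := by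
    intro j
    simp [Matrix.mul_apply, Matrix.mulVec, dotProduct, mul_comm]
  calc ∑ j, ((B * Pᵀ) i j) ^ 2 = ∑ j, (P *ᵥ (B i)) j * (P *ᵥ (B i)) j := by
        refine Finset.sum_congr rfl fun j _ => ?_
        rw [h1 j, sq]
    _ = (P *ᵥ (B i)) ⬝ᵥ (P *ᵥ (B i)) := rfl
    _ = (B i) ⬝ᵥ ((Pᵀ * P) *ᵥ (B i)) := by
        symm
        rw [← Matrix.mulVec_mulVec, Matrix.dotProduct_mulVec, Matrix.vecMul_transpose]

lemma frobSq_rows {m n : ℕ} (B : Matrix (Fin m) (Fin n) ℝ) :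
    frobSq B = ∑ i, (B i) ⬝ᵥ (B i) := by
  unfold frobSq
  refine Finset.sum_congr rfl fun i _ => ?_
  simp [dotProduct, sq]

lemma frobSq_mul_bounds {m n : ℕ} (B : Matrix (Fin m) (Fin n) ℝ) (P : Matrix (Fin n) (Fin n) ℝ)
    (H : Matrix (Fin n) (Fin n) ℝ) (hH : Pᵀ * P = H) (hHh : H.IsHermitian) (lo hi : ℝ)
    (hlo : ∀ i, lo ≤ hHh.eigenvalues i) (hhi : ∀ i, hHh.eigenvalues i ≤ hi) :
    lo * frobSq B ≤ frobSq (B * Pᵀ) ∧ frobSq (B * Pᵀ) ≤ hi * frobSq B := by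
  rw [frobSq_mul_transpose_rows, frobSq_rows, hH]
  constructor
  · rw [Finset.mul_sum]
    exact Finset.sum_le_sum fun i _ => (quad_bounds H hHh lo hi hlo hhi (B i)).1
  · rw [Finset.mul_sum]
    exact Finset.sum_le_sum fun i _ => (quad_bounds H hHh lo hi hlo hhi (B i)).2

theorem stmt14 {p1 p2 r : ℕ} (hr : 0 < r)
    (L : Matrix (Fin p1) (Fin r) ℝ) (R : Matrix (Fin p2) (Fin r) ℝ)
    (hrank : (L * Rᵀ).rank = r)
    (U : Matrix (Fin p1) (Fin r) ℝ) (Uperp : Matrix (Fin p1) (Fin (p1 - r)) ℝ)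
    (V : Matrix (Fin p2) (Fin r) ℝ) (Vperp : Matrix (Fin p2) (Fin (p2 - r)) ℝ)
    (Sg : Matrix (Fin r) (Fin r) ℝ)
    (hU : Uᵀ * U = 1) (hUperp : Uperpᵀ * Uperp = 1) (hUUp : Uᵀ * Uperp = 0)
    (hUcomp : U * Uᵀ + Uperp * Uperpᵀ = 1)
    (hV : Vᵀ * V = 1) (hVperp : Vperpᵀ * Vperp = 1) (hVVp : Vᵀ * Vperp = 0)
    (hVcomp : V * Vᵀ + Vperp * Vperpᵀ = 1)
    (hdiag : ∀ i j, i ≠ j → Sg i j = 0) (hpos : ∀ i, 0 < Sg i i)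
    (hSVD : L * Rᵀ = U * Sg * Vᵀ)
    (hP1 : IsUnit (Uᵀ * L).det) (hP2 : IsUnit (Vᵀ * R).det)
    (S : Matrix (Fin r) (Fin r) ℝ)
    (D1 : Matrix (Fin (p1 - r)) (Fin r) ℝ) (D2 : Matrix (Fin (p2 - r)) (Fin r) ℝ)
    (AL : Matrix (Fin p1) (Fin r) ℝ) (AR : Matrix (Fin p2) (Fin r) ℝ)
    (hAL : AL = (U * (S * ((Vᵀ * R) * (Vᵀ * R)ᵀ)) + Uperp * D1) * (((Vᵀ * R)⁻¹)ᵀ))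
    (hAR : AR = (V * (Sᵀ * ((Uᵀ * L) * (Uᵀ * L)ᵀ)) + Vperp * D2) * (((Uᵀ * L)⁻¹)ᵀ)) :
    min (singval L ⟨r - 1, by omega⟩) (singval R ⟨r - 1, by omega⟩) ^ 2 *
        (frobSq AL + frobSq AR) ≤ frobSq (L * ARᵀ + AL * Rᵀ) ∧
      frobSq (L * ARᵀ + AL * Rᵀ) ≤
        2 * max (singval L ⟨0, hr⟩) (singval R ⟨0, hr⟩) ^ 2 *
          (frobSq AL + frobSq AR) := by
  set P1 := Uᵀ * L with hP1def
  set P2 := Vᵀ * R with hP2def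
  have hP1i : P1 * P1⁻¹ = 1 := Matrix.mul_nonsing_inv _ hP1
  have hP1i' : P1⁻¹ * P1 = 1 := Matrix.nonsing_inv_mul _ hP1
  have hP2i : P2 * P2⁻¹ = 1 := Matrix.mul_nonsing_inv _ hP2
  have hP2i' : P2⁻¹ * P2 = 1 := Matrix.nonsing_inv_mul _ hP2
  have hUpU : Uperpᵀ * U = 0 := by
    have := congrArg Matrix.transpose hUUp; simpa [Matrix.transpose_mul] using this
  have hVpV : Vperpᵀ * V = 0 := by
    have := congrArg Matrix.transpose hVVp; simpa [Matrix.transpose_mul] using this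
  -- L = U * P1
  have hRV : Rᵀ * (V * (P2⁻¹)ᵀ) = 1 := by
    rw [← Matrix.mul_assoc]
    have h : Rᵀ * V = P2ᵀ := by rw [hP2def, Matrix.transpose_mul, Matrix.transpose_transpose]
    rw [h, ← Matrix.transpose_mul, hP2i', Matrix.transpose_one]
  have hUpL : Uperpᵀ * L = 0 := by
    have h0 : Uperpᵀ * (L * Rᵀ) = 0 := by
      rw [hSVD, ← Matrix.mul_assoc, ← Matrix.mul_assoc, hUpU, Matrix.zero_mul, Matrix.zero_mul]
    calc Uperpᵀ * L = Uperpᵀ * L * (Rᵀ * (V * (P2⁻¹)ᵀ)) := by rw [hRV, Matrix.mul_one]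
      _ = (Uperpᵀ * (L * Rᵀ)) * (V * (P2⁻¹)ᵀ) := by
          simp [Matrix.mul_assoc]
      _ = 0 := by rw [h0, Matrix.zero_mul]
  have hL : L = U * P1 := by
    calc L = (U * Uᵀ + Uperp * Uperpᵀ) * L := by rw [hUcomp, Matrix.one_mul]
      _ = U * P1 + Uperp * (Uperpᵀ * L) := by
          rw [Matrix.add_mul, Matrix.mul_assoc, Matrix.mul_assoc, hP1def]
      _ = U * P1 := by rw [hUpL, Matrix.mul_zero, add_zero]
  -- R = V * P2
  have hLU : Lᵀ * (U * (P1⁻¹)ᵀ) = 1 := by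
    rw [← Matrix.mul_assoc]
    have h : Lᵀ * U = P1ᵀ := by rw [hP1def, Matrix.transpose_mul, Matrix.transpose_transpose]
    rw [h, ← Matrix.transpose_mul, hP1i', Matrix.transpose_one]
  have hVpR : Vperpᵀ * R = 0 := by
    have h0 : Vperpᵀ * (R * Lᵀ) = 0 := by
      have hRL : R * Lᵀ = V * Sgᵀ * Uᵀ := by
        have := congrArg Matrix.transpose hSVD
        simpa [Matrix.transpose_mul, Matrix.mul_assoc] using this
      rw [hRL]
      rw [← Matrix.mul_assoc, ← Matrix.mul_assoc, hVpV, Matrix.zero_mul, Matrix.zero_mul]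
    calc Vperpᵀ * R = Vperpᵀ * R * (Lᵀ * (U * (P1⁻¹)ᵀ)) := by rw [hLU, Matrix.mul_one]
      _ = (Vperpᵀ * (R * Lᵀ)) * (U * (P1⁻¹)ᵀ) := by
          simp [Matrix.mul_assoc]
      _ = 0 := by rw [h0, Matrix.zero_mul]
  have hR : R = V * P2 := by
    calc R = (V * Vᵀ + Vperp * Vperpᵀ) * R := by rw [hVcomp, Matrix.one_mul]
      _ = V * P2 + Vperp * (Vperpᵀ * R) := by
          rw [Matrix.add_mul, Matrix.mul_assoc, Matrix.mul_assoc, hP2def]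
      _ = V * P2 := by rw [hVpR, Matrix.mul_zero, add_zero]
  -- cancellation helpers
  have hc1 : P1ᵀ * (P1⁻¹)ᵀ = 1 := by rw [← Matrix.transpose_mul, hP1i', Matrix.transpose_one]
  have hc1' : (P1⁻¹)ᵀ * P1ᵀ = 1 := by rw [← Matrix.transpose_mul, hP1i, Matrix.transpose_one]
  have hc2 : P2ᵀ * (P2⁻¹)ᵀ = 1 := by rw [← Matrix.transpose_mul, hP2i', Matrix.transpose_one]
  have hc2' : (P2⁻¹)ᵀ * P2ᵀ = 1 := by rw [← Matrix.transpose_mul, hP2i, Matrix.transpose_one]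
  have hg1 : ∀ {k : ℕ} (C : Matrix (Fin r) (Fin k) ℝ), P1 * (P1⁻¹ * C) = C := fun C => by
    rw [← Matrix.mul_assoc, hP1i, Matrix.one_mul]
  have hg2 : ∀ {k : ℕ} (C : Matrix (Fin r) (Fin k) ℝ), (P2⁻¹)ᵀ * (P2ᵀ * C) = C := fun C => by
    rw [← Matrix.mul_assoc, hc2', Matrix.one_mul]
  have hg2b : ∀ {k : ℕ} (C : Matrix (Fin r) (Fin k) ℝ), P2ᵀ * ((P2⁻¹)ᵀ * C) = C := fun C => by
    rw [← Matrix.mul_assoc, hc2, Matrix.one_mul]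
  -- decompositions of AL and AR
  set E1 := D1 * (P2⁻¹)ᵀ with hE1
  set E2 := D2 * (P1⁻¹)ᵀ with hE2
  set B1 := Sᵀ * P1 with hB1
  set B2 := S * P2 with hB2
  have hALs : AL = U * B2 + Uperp * E1 := by
    rw [hAL, hB2, hE1]
    simp [Matrix.add_mul, Matrix.mul_assoc, hc2]
  have hARs : AR = V * B1 + Vperp * E2 := by
    rw [hAR, hB1, hE2]
    simp [Matrix.add_mul, Matrix.mul_assoc, hc1]
  -- decomposition of the image
  have hLAR : L * ARᵀ = U * (((B1 * P1ᵀ)ᵀ * Vᵀ) + (D2ᵀ * Vperpᵀ)) := by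
    rw [hL, hARs]
    simp [hB1, hE2, Matrix.transpose_add, Matrix.transpose_mul, Matrix.mul_add,
      Matrix.add_mul, Matrix.mul_assoc, hg1]
  have hALR : AL * Rᵀ = U * ((B2 * P2ᵀ) * Vᵀ) + Uperp * (D1 * Vᵀ) := by
    rw [hALs, hR]
    simp [hB2, hE1, Matrix.transpose_mul, Matrix.add_mul, Matrix.mul_assoc, hg2]
  have hT : L * ARᵀ + AL * Rᵀ =
      U * (((B1 * P1ᵀ)ᵀ + B2 * P2ᵀ) * Vᵀ + D2ᵀ * Vperpᵀ) + Uperp * (D1 * Vᵀ) := by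
    rw [hLAR, hALR]
    simp only [Matrix.add_mul, Matrix.mul_add]
    abel
  -- Frobenius norm computations
  have hfT : frobSq (L * ARᵀ + AL * Rᵀ) =
      frobSq ((B1 * P1ᵀ)ᵀ + B2 * P2ᵀ) + frobSq D2 + frobSq D1 := by
    rw [hT, frobSq_ortho U Uperp _ _ hU hUperp hUUp, frobSq_mul_orthoT D1 V hV]
    have h : ((B1 * P1ᵀ)ᵀ + B2 * P2ᵀ) * Vᵀ + D2ᵀ * Vperpᵀ =
        (V * ((B1 * P1ᵀ)ᵀ + B2 * P2ᵀ)ᵀ + Vperp * D2)ᵀ := by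
      simp [Matrix.transpose_add, Matrix.transpose_mul]
    rw [h, frobSq_transpose, frobSq_ortho V Vperp _ _ hV hVperp hVVp, frobSq_transpose]
  have hfAL : frobSq AL = frobSq B2 + frobSq E1 := by
    rw [hALs]; exact frobSq_ortho U Uperp _ _ hU hUperp hUUp
  have hfAR : frobSq AR = frobSq B1 + frobSq E2 := by
    rw [hARs]; exact frobSq_ortho V Vperp _ _ hV hVperp hVVp
  have hD1 : D1 = E1 * P2ᵀ := by
    rw [hE1, Matrix.mul_assoc, hc2', Matrix.mul_one]
  have hD2 : D2 = E2 * P1ᵀ := by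
    rw [hE2, Matrix.mul_assoc, hc1', Matrix.mul_one]
  have hKfrob : frobSq ((B1 * P1ᵀ)ᵀ + B2 * P2ᵀ) =
      frobSq (B1 * P1ᵀ) + frobSq (B2 * P2ᵀ) + 2 * ((B1 * P1ᵀ) * (B2 * P2ᵀ)).trace :=
    frobSq_transpose_add _ _
  have hcross : ((B1 * P1ᵀ) * (B2 * P2ᵀ)).trace = frobSq (P1ᵀ * (S * P2)) := by
    rw [frobSq_eq_trace]
    have e1 : (B1 * P1ᵀ) * (B2 * P2ᵀ) = (Sᵀ * (P1 * (P1ᵀ * (S * P2)))) * P2ᵀ := by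
      rw [hB1, hB2]; simp [Matrix.mul_assoc]
    rw [e1, Matrix.trace_mul_comm]
    congr 1
    simp [Matrix.transpose_mul, Matrix.mul_assoc]
  have hKub : frobSq ((B1 * P1ᵀ)ᵀ + B2 * P2ᵀ) ≤
      2 * frobSq (B1 * P1ᵀ) + 2 * frobSq (B2 * P2ᵀ) := by
    have := frobSq_add_le ((B1 * P1ᵀ)ᵀ) (B2 * P2ᵀ)
    rwa [frobSq_transpose] at this
  -- eigenvalue side
  have hLtL : P1ᵀ * P1 = Lᵀ * L := by
    conv_rhs => rw [hL, Matrix.transpose_mul U P1, Matrix.mul_assoc,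
      ← Matrix.mul_assoc Uᵀ U P1, hU, Matrix.one_mul]
  have hRtR : P2ᵀ * P2 = Rᵀ * R := by
    conv_rhs => rw [hR, Matrix.transpose_mul V P2, Matrix.mul_assoc,
      ← Matrix.mul_assoc Vᵀ V P2, hV, Matrix.one_mul]
  have hHL : (Lᵀ * L).IsHermitian := by
    simpa [Matrix.conjTranspose_eq_transpose_of_trivial] using
      Matrix.isHermitian_conjTranspose_mul_self L
  have hHR : (Rᵀ * R).IsHermitian := by
    simpa [Matrix.conjTranspose_eq_transpose_of_trivial] using
      Matrix.isHermitian_conjTranspose_mul_self R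
  have hpsdL : ∀ i, 0 ≤ hHL.eigenvalues i := by
    have h := Matrix.posSemidef_conjTranspose_mul_self L
    rw [Matrix.conjTranspose_eq_transpose_of_trivial] at h
    exact fun i => h.eigenvalues_nonneg i
  have hpsdR : ∀ i, 0 ≤ hHR.eigenvalues i := by
    have h := Matrix.posSemidef_conjTranspose_mul_self R
    rw [Matrix.conjTranspose_eq_transpose_of_trivial] at h
    exact fun i => h.eigenvalues_nonneg i
  set lo1 := eigval (Lᵀ * L) hHL ⟨r - 1, by omega⟩ with hlo1def
  set hi1 := eigval (Lᵀ * L) hHL ⟨0, hr⟩ with hhi1def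
  set lo2 := eigval (Rᵀ * R) hHR ⟨r - 1, by omega⟩ with hlo2def
  set hi2 := eigval (Rᵀ * R) hHR ⟨0, hr⟩ with hhi2def
  have hlo1e : ∀ i, lo1 ≤ hHL.eigenvalues i := eigval_min_le hr _ hHL
  have hhi1e : ∀ i, hHL.eigenvalues i ≤ hi1 := le_eigval_max hr _ hHL
  have hlo2e : ∀ i, lo2 ≤ hHR.eigenvalues i := eigval_min_le hr _ hHR
  have hhi2e : ∀ i, hHR.eigenvalues i ≤ hi2 := le_eigval_max hr _ hHR
  have h0lo1 : 0 ≤ lo1 := by rw [hlo1def]; unfold eigval; exact hpsdL _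
  have h0lo2 : 0 ≤ lo2 := by rw [hlo2def]; unfold eigval; exact hpsdR _
  have h0hi1 : 0 ≤ hi1 := by rw [hhi1def]; unfold eigval; exact hpsdL _
  have h0hi2 : 0 ≤ hi2 := by rw [hhi2def]; unfold eigval; exact hpsdR _
  -- singular values
  have hs1 : singval L ⟨r - 1, by omega⟩ = Real.sqrt lo1 := rfl
  have hs2 : singval R ⟨r - 1, by omega⟩ = Real.sqrt lo2 := rfl
  have hs3 : singval L ⟨0, hr⟩ = Real.sqrt hi1 := rfl
  have hs4 : singval R ⟨0, hr⟩ = Real.sqrt hi2 := rfl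
  have hminsq : min (singval L ⟨r - 1, by omega⟩) (singval R ⟨r - 1, by omega⟩) ^ 2
      = min lo1 lo2 := by
    rw [hs1, hs2]
    rcases le_total lo1 lo2 with h | h
    · rw [min_eq_left (Real.sqrt_le_sqrt h), min_eq_left h, Real.sq_sqrt h0lo1]
    · rw [min_eq_right (Real.sqrt_le_sqrt h), min_eq_right h, Real.sq_sqrt h0lo2]
  have hmaxsq : max (singval L ⟨0, hr⟩) (singval R ⟨0, hr⟩) ^ 2 = max hi1 hi2 := by
    rw [hs3, hs4]
    rcases le_total hi1 hi2 with h | h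
    · rw [max_eq_right (Real.sqrt_le_sqrt h), max_eq_right h, Real.sq_sqrt h0hi2]
    · rw [max_eq_left (Real.sqrt_le_sqrt h), max_eq_left h, Real.sq_sqrt h0hi1]
  -- frobenius bounds via eigenvalues
  have hb1 := frobSq_mul_bounds B1 P1 (Lᵀ * L) hLtL hHL lo1 hi1 hlo1e hhi1e
  have hb2 := frobSq_mul_bounds B2 P2 (Rᵀ * R) hRtR hHR lo2 hi2 hlo2e hhi2e
  have hbe1 := frobSq_mul_bounds E1 P2 (Rᵀ * R) hRtR hHR lo2 hi2 hlo2e hhi2e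
  have hbe2 := frobSq_mul_bounds E2 P1 (Lᵀ * L) hLtL hHL lo1 hi1 hlo1e hhi1e
  rw [hminsq, hmaxsq, hfT, hfAL, hfAR, hKfrob, hcross]
  have hfD1 : frobSq D1 = frobSq (E1 * P2ᵀ) := by rw [← hD1]
  have hfD2 : frobSq D2 = frobSq (E2 * P1ᵀ) := by rw [← hD2]
  rw [hfD1, hfD2]
  have hnM : 0 ≤ frobSq (P1ᵀ * (S * P2)) := frobSq_nonneg _
  have hnB1 := frobSq_nonneg B1
  have hnB2 := frobSq_nonneg B2
  have hnE1 := frobSq_nonneg E1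
  have hnE2 := frobSq_nonneg E2
  have hm1 : min lo1 lo2 ≤ lo1 := min_le_left _ _
  have hm2 : min lo1 lo2 ≤ lo2 := min_le_right _ _
  have hM1 : hi1 ≤ max hi1 hi2 := le_max_left _ _
  have hM2 : hi2 ≤ max hi1 hi2 := le_max_right _ _
  constructor
  · have t1 : min lo1 lo2 * frobSq B1 ≤ lo1 * frobSq B1 :=
      mul_le_mul_of_nonneg_right hm1 hnB1
    have t2 : min lo1 lo2 * frobSq B2 ≤ lo2 * frobSq B2 :=
      mul_le_mul_of_nonneg_right hm2 hnB2
    have t3 : min lo1 lo2 * frobSq E1 ≤ lo2 * frobSq E1 :=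
      mul_le_mul_of_nonneg_right hm2 hnE1
    have t4 : min lo1 lo2 * frobSq E2 ≤ lo1 * frobSq E2 :=
      mul_le_mul_of_nonneg_right hm1 hnE2
    have expand : min lo1 lo2 * (frobSq B2 + frobSq E1 + (frobSq B1 + frobSq E2)) =
        min lo1 lo2 * frobSq B2 + min lo1 lo2 * frobSq E1 + min lo1 lo2 * frobSq B1 +
          min lo1 lo2 * frobSq E2 := by ring
    linarith [hb1.1, hb2.1, hbe1.1, hbe2.1]
  · have t1 : hi1 * frobSq B1 ≤ max hi1 hi2 * frobSq B1 :=
      mul_le_mul_of_nonneg_right hM1 hnB1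
    have t2 : hi2 * frobSq B2 ≤ max hi1 hi2 * frobSq B2 :=
      mul_le_mul_of_nonneg_right hM2 hnB2
    have t3 : hi2 * frobSq E1 ≤ max hi1 hi2 * frobSq E1 :=
      mul_le_mul_of_nonneg_right hM2 hnE1
    have t4 : hi1 * frobSq E2 ≤ max hi1 hi2 * frobSq E2 :=
      mul_le_mul_of_nonneg_right hM1 hnE2
    have hM0 : 0 ≤ max hi1 hi2 := le_trans h0hi1 hM1
    have s1 : 0 ≤ max hi1 hi2 * frobSq E1 := mul_nonneg hM0 hnE1
    have s2 : 0 ≤ max hi1 hi2 * frobSq E2 := mul_nonneg hM0 hnE2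
    have hKub' := hKub
    rw [hKfrob, hcross] at hKub'
    have expand : 2 * max hi1 hi2 * (frobSq B2 + frobSq E1 + (frobSq B1 + frobSq E2)) =
        2 * (max hi1 hi2 * frobSq B2) + 2 * (max hi1 hi2 * frobSq E1) +
          2 * (max hi1 hi2 * frobSq B1) + 2 * (max hi1 hi2 * frobSq E2) := by ring
    linarith [hb1.2, hb2.2, hbe1.2, hbe2.2, hKub', s1, s2]
end
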